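/- Let k_1 ≥ k_2 ≥ ... ≥ k_t ≥ 2 and n be positive integers, and ε > 0 a small constant, with n sufficiently large and n(1-ε) ≤ Σ_{i=1}^t k_i ≤ n - n·(8·k_1·ln n / n)^{1/k_1}. Then (k_1·k_2/n^2)^{1/t} > 1 - (1/2)·(1 - (Σ_{i=1}^t k_i)/n)^{k_1}. -/

import Mathlib

/-!
Write `S = Σ kᵢ` and `x = 1 - S/n`. Since `k₁ k₂ ≥ 1` and `e^y ≥ 1 + y`, the left-hand
side is at least `1 - 2 ln n / t`, and `S ≤ t k₁` turns this into `1 - 2 k₁ ln n / S`. It remains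
to see `2 k₁ ln n / S < x^{k₁} / 2`. The upper bound on `S` says exactly
`x^{k₁} ≥ 8 k₁ ln n / n`, which suffices when `S > n/2`. When `S ≤ n/2` we have
`x^{k₁} ≥ 2^{-k₁}`, while the lower bound on `S` gives
`2 k₁ ln n / S ≤ 2 k₁ ln n / (n (1 - ε)) → 0`.
-/

open Finset Real Filter

lemma one_add_log_mul_le_rpow {y : ℝ} (hy : 0 < y) (s : ℝ) : 1 + log y * s ≤ y ^ s := by
  rw [rpow_def_of_pos hy]
  linarith [add_one_le_exp (log y * s)]

lemma one_sub_two_mul_log_div_le_rpow {a n t : ℝ} (ha : 1 ≤ a) (hn : 0 < n) (ht : 0 ≤ t) :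
    1 - 2 * log n / t ≤ (a / n ^ 2) ^ (1 / t) := by
  have hlog : log (a / n ^ 2) = log a - 2 * log n := by
    rw [log_div (by positivity) (by positivity), log_pow]
    push_cast
    ring
  calc 1 - 2 * log n / t ≤ 1 + log (a / n ^ 2) * (1 / t) := by
        rw [hlog, sub_mul, mul_one_div (2 * log n)]
        have := mul_le_mul_of_nonneg_right (log_nonneg ha) (one_div_nonneg.mpr ht)
        linarith
    _ ≤ _ := one_add_log_mul_le_rpow (by positivity) _

lemma le_one_sub_div_pow_of_le_sub_mul_rpow {c n S : ℝ} {K : ℕ} (hK : K ≠ 0) (hc : 0 ≤ c)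
    (hn : 0 < n) (hS : S ≤ n - n * c ^ ((1 : ℝ) / K)) : c ≤ (1 - S / n) ^ K := by
  have hroot : c ^ ((1 : ℝ) / K) ≤ 1 - S / n := by
    rw [le_sub_iff_add_le, ← le_sub_iff_add_le', div_le_iff₀ hn]
    linarith
  calc c = (c ^ ((1 : ℝ) / K)) ^ K := by rw [one_div, rpow_inv_natCast_pow hc hK]
    _ ≤ _ := pow_le_pow_left₀ (by positivity) hroot K

lemma tendsto_mul_log_div_atTop (C : ℝ) :
    Tendsto (fun n : ℕ => C * log n / n) atTop (nhds 0) := by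
  have hlog : Tendsto (fun x : ℝ => log x / x) atTop (nhds 0) := by
    simpa using tendsto_pow_log_div_mul_add_atTop 1 0 1 one_ne_zero
  simpa [mul_div_assoc] using (hlog.comp tendsto_natCast_atTop_atTop).const_mul C

lemma two_mul_log_div_lt_half_one_sub_div_pow {K : ℕ} {ε n S : ℝ} (hK : K ≠ 0) (hn : 1 < n)
    (hε : ε < 1) (hsmall : 2 * K / (1 - ε) * log n / n < 1 / 2 * (1 / 2) ^ K)
    (hlow : n * (1 - ε) ≤ S) (hhigh : S ≤ n - n * (8 * K * log n / n) ^ ((1 : ℝ) / K)) :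
    2 * K * log n / S < 1 / 2 * (1 - S / n) ^ K := by
  have hn0 : 0 < n := by linarith
  have hKlog : 0 < K * log n := mul_pos (by positivity) (log_pos hn)
  have hS : 0 < S := lt_of_lt_of_le (mul_pos hn0 (by linarith)) hlow
  have hpow := le_one_sub_div_pow_of_le_sub_mul_rpow hK (div_nonneg (by linarith) hn0.le) hn0 hhigh
  rcases lt_or_ge (n / 2) S with hS_half | hS_half
  · calc 2 * K * log n / S < 2 * K * log n / (n / 2) := by
          rw [mul_assoc]
          exact div_lt_div_of_pos_left (by positivity) (by positivity) hS_half
      _ = 1 / 2 * (8 * K * log n / n) := by ring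
      _ ≤ _ := by gcongr
  · have hx : 1 / 2 ≤ 1 - S / n := by
      rw [le_sub_comm, div_le_iff₀ hn0]
      linarith
    calc 2 * K * log n / S ≤ 2 * K * log n / (n * (1 - ε)) :=
          div_le_div_of_nonneg_left (by linarith) (mul_pos hn0 (by linarith)) hlow
      _ = 2 * K / (1 - ε) * log n / n := by rw [div_mul_eq_mul_div, div_div, mul_comm (1 - ε) n]
      _ < 1 / 2 * (1 / 2) ^ K := hsmall
      _ ≤ _ := by gcongr

/-- Lemma 3.4: if `n(1-ε) ≤ Σ kᵢ ≤ n - n (8 k₁ ln n / n)^(1/k₁)` with `ε` small,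
`k₁ ≥ k₂ ≥ … ≥ k_t ≥ 2`, and `n` sufficiently large (depending on `k₁ = K` and `ε`),
then `(k₁ k₂ / n²)^(1/t) > 1 - (1/2) (1 - (Σ kᵢ)/n)^(k₁)`. -/
theorem sum_large_root_inequality
    (K : ℕ) (ε : ℝ) (hε1 : ε < 1) :
    ∃ N : ℕ, ∀ n ≥ N, ∀ t : ℕ, ∀ ht : 2 ≤ t, ∀ k : Fin t → ℕ,
      k ⟨0, by omega⟩ = K →
      (∀ i j : Fin t, i ≤ j → k j ≤ k i) →
      (∀ i, 2 ≤ k i) →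
      ((n : ℝ) * (1 - ε) ≤ ∑ i : Fin t, (k i : ℝ)) →
      ((∑ i : Fin t, (k i : ℝ)) ≤
        n - n * ((8 * K * Real.log n / n) ^ ((1 : ℝ) / K))) →
      ((k ⟨0, by omega⟩ : ℝ) * (k ⟨1, by omega⟩ : ℝ) / (n : ℝ) ^ 2) ^ ((1 : ℝ) / t) >
        1 - (1 / 2) * (1 - (∑ i : Fin t, (k i : ℝ)) / n) ^ (k ⟨0, by omega⟩) := by
  obtain ⟨N, hN⟩ := eventually_atTop.mp <| (eventually_gt_atTop 1).and <|
    (tendsto_mul_log_div_atTop (2 * K / (1 - ε))).eventually_lt_const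
      (by positivity : (0 : ℝ) < 1 / 2 * (1 / 2) ^ K)
  refine ⟨N, fun n hn t ht k hk0 hmono hk2 hlow hhigh => ?_⟩
  obtain ⟨hn_gt, hsmall⟩ := hN n hn
  have hn1 : (1 : ℝ) < n := by exact_mod_cast hn_gt
  have hK : K ≠ 0 := by have := hk2 ⟨0, by omega⟩; omega
  have hkK : ∀ i, k i ≤ K := fun i =>
    hk0 ▸ hmono ⟨0, by omega⟩ i (Fin.mk_le_mk.mpr (Nat.zero_le _))
  set S := ∑ i : Fin t, (k i : ℝ)
  have hS_pos : 0 < S := lt_of_lt_of_le (mul_pos (by linarith) (by linarith)) hlow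
  have hkey := two_mul_log_div_lt_half_one_sub_div_pow hK hn1 hε1 hsmall hlow hhigh
  have hprod : (1 : ℝ) ≤ K * k ⟨1, by omega⟩ :=
    one_le_mul_of_one_le_of_one_le (by exact_mod_cast Nat.one_le_iff_ne_zero.mpr hK)
      (by exact_mod_cast (hk2 ⟨1, by omega⟩).trans' one_le_two)
  have hS_le : S ≤ t * K := by
    simpa using sum_le_card_nsmul univ (fun i => (k i : ℝ)) K fun i _ => by exact_mod_cast hkK i
  have ht_bound : 2 * log n / t ≤ 2 * K * log n / S := by
    rw [div_le_div_iff₀ (by positivity) hS_pos]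
    nlinarith [log_pos hn1]
  rw [gt_iff_lt, hk0]
  calc 1 - 1 / 2 * (1 - S / n) ^ K < 1 - 2 * log n / t := by linarith
    _ ≤ _ := one_sub_two_mul_log_div_le_rpow hprod (by linarith) (Nat.cast_nonneg t)
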